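/- Fix a number field L with ring of integers O_L. For every ε > 0 there are constants (depending only on L and ε) such that for every positive integer n and all real X ≥ 2: (i) Σ_{𝔞 : n | N(𝔞), N(𝔞) ≤ X} 1/N(𝔞) = O( X·log(X)·n^{ε}/n ), the sum over nonzero ideals 𝔞 of O_L with n dividing N(𝔞) and N(𝔞) ≤ X; and (ii) Σ_{(𝔞,𝔟) : n | N(𝔞𝔟), N(𝔞𝔟) ≤ X} 1/N(𝔞𝔟) = O( X·log²(X)·n^{ε}/n ), the sum over pairs of nonzero ideals 𝔞, 𝔟 of O_L with n dividing N(𝔞·𝔟) and N(𝔞·𝔟) ≤ X. -/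

import Mathlib

/-!
Both sums are in fact `O(X / n)`. The number of ideals of norm `m`, and the number of pairs
`(𝔞, 𝔟)` with `N(𝔞𝔟) = m`, are at most `τ((m))²`, where `τ` counts ideal divisors, since all
these ideals divide `(m)`. A divisor bound `τ(J)^k = O_k(N J)` holds for every `k`: prime by
prime, `(e + 1)^k ≤ N(𝔭)^e` as soon as `N 𝔭 ≥ 2^k`, and only finitely many primes are smaller.
With `k = 2·[L : ℚ]` and `N((m)) = m^[L : ℚ]` this gives `τ((m))² = O(m)`, so each norm `m`
contributes `O(1)` to the sums, and there are at most `X / n` multiples of `n` up to `X`.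
-/

open scoped Classical
open Finset NumberField UniqueFactorizationMonoid

theorem exists_succ_pow_le_mul_two_pow (k : ℕ) :
    ∃ M : ℝ, 1 ≤ M ∧ ∀ c : ℕ, ((c : ℝ) + 1) ^ k ≤ M * 2 ^ c := by
  obtain ⟨B, hB⟩ := (tendsto_pow_const_div_const_pow_of_one_lt k one_lt_two).bddAbove_range
  refine ⟨2 * max B 1, by linarith [le_max_right B 1], fun c => ?_⟩
  have h : ((c + 1 : ℕ) : ℝ) ^ k / 2 ^ (c + 1) ≤ max B 1 :=
    (hB ⟨c + 1, rfl⟩).trans (le_max_left B 1)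
  rw [div_le_iff₀ (by positivity)] at h
  push_cast at h
  rw [pow_succ] at h
  linarith

theorem succ_pow_le_ite_mul_pow {k : ℕ} {M : ℝ} (hM : ∀ c : ℕ, ((c : ℝ) + 1) ^ k ≤ M * 2 ^ c)
    {q : ℕ} (hq : 2 ≤ q) (e : ℕ) :
    ((e : ℝ) + 1) ^ k ≤ (if q < 2 ^ k then M else 1) * (q : ℝ) ^ e := by
  split_ifs with hsmall
  · calc ((e : ℝ) + 1) ^ k ≤ M * 2 ^ e := hM e
      _ ≤ M * (q : ℝ) ^ e := by
        have hM0 : (0 : ℝ) ≤ M := le_trans (by positivity) ((hM 0).trans_eq (by simp))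
        gcongr; exact_mod_cast hq
  · push Not at hsmall
    rw [one_mul]
    have : (e + 1) ^ k ≤ q ^ e :=
      calc (e + 1) ^ k ≤ (2 ^ e) ^ k := Nat.pow_le_pow_left Nat.lt_two_pow_self _
        _ = (2 ^ k) ^ e := by rw [← pow_mul, ← pow_mul, mul_comm]
        _ ≤ q ^ e := Nat.pow_le_pow_left hsmall _
    exact_mod_cast this

theorem le_mul_of_pow_le_mul_pow {d : ℕ} (hd : d ≠ 0) {x y C : ℝ} (hx : 0 ≤ x) (hy : 0 ≤ y)
    (hC : 1 ≤ C) (h : x ^ d ≤ C * y ^ d) : x ≤ C * y := by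
  refine (pow_le_pow_iff_left₀ hx (by positivity) hd).mp ?_
  calc x ^ d ≤ C * y ^ d := h
    _ ≤ C ^ d * y ^ d := by gcongr; exact le_self_pow₀ hC hd
    _ = (C * y) ^ d := (mul_pow C y d).symm

namespace UniqueFactorizationMonoid

variable {α : Type*} [CommMonoidWithZero α] [NormalizationMonoid α]
  [UniqueFactorizationMonoid α] [Subsingleton αˣ]

theorem ncard_setOf_dvd_le_prod_count_add_one {a : α} (ha : a ≠ 0) :
    {b | b ∣ a}.ncard ≤
      ∏ p ∈ (normalizedFactors a).toFinset, ((normalizedFactors a).count p + 1) := by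
  rw [← Multiset.card_Iic, ← Set.ncard_coe_finset]
  refine Set.ncard_le_ncard_of_injOn normalizedFactors (fun b hb => ?_) (fun b hb c hc h => ?_)
    (Finset.finite_toSet _)
  · simpa using (dvd_iff_normalizedFactors_le_normalizedFactors (ne_zero_of_dvd_ne_zero ha hb)
      ha).mp hb
  · exact associated_iff_eq.mp ((prod_normalizedFactors (ne_zero_of_dvd_ne_zero ha hb)).symm.trans
      (h ▸ prod_normalizedFactors (ne_zero_of_dvd_ne_zero ha hc)))

end UniqueFactorizationMonoid

namespace Ideal

variable {S : Type*} [CommRing S] [IsDedekindDomain S] [Module.Free ℤ S]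

theorem absNorm_eq_prod_normalizedFactors {J : Ideal S} (hJ : J ≠ ⊥) :
    absNorm J =
      ∏ P ∈ (normalizedFactors J).toFinset, absNorm P ^ (normalizedFactors J).count P := by
  conv_lhs => rw [← associated_iff_eq.mp (prod_normalizedFactors hJ)]
  rw [map_multiset_prod, Finset.prod_multiset_map_count]

theorem dvd_span_absNorm (I : Ideal S) : I ∣ span {(absNorm I : S)} :=
  dvd_iff_le.mpr (span_singleton_absNorm_le I)

variable [Module.Finite ℤ S]

theorem two_le_absNorm_of_mem_normalizedFactors {P J : Ideal S} (hP : P ∈ normalizedFactors J) :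
    2 ≤ absNorm P := by
  have hprime := prime_of_normalized_factor P hP
  have h0 : absNorm P ≠ 0 := absNorm_eq_zero_iff.not.mpr hprime.ne_zero
  have h1 : absNorm P ≠ 1 := fun h => hprime.not_isUnit (isUnit_iff.mpr (absNorm_eq_one_iff.mp h))
  omega

variable [CharZero S]

theorem finite_setOf_dvd {J : Ideal S} (hJ : J ≠ ⊥) : {I | I ∣ J}.Finite :=
  (finite_setOfPred_absNorm_le (absNorm J)).subset fun _ hI =>
    Nat.le_of_dvd (Nat.pos_of_ne_zero (absNorm_eq_zero_iff.not.mpr hJ))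
      (absNorm_dvd_absNorm_of_le (le_of_dvd hI))

theorem exists_ncard_dvd_pow_le_mul_absNorm (k : ℕ) :
    ∃ C : ℝ, 1 ≤ C ∧ ∀ J : Ideal S, J ≠ ⊥ → ({I | I ∣ J}.ncard : ℝ) ^ k ≤ C * absNorm J := by
  obtain ⟨M, hM1, hM⟩ := exists_succ_pow_le_mul_two_pow k
  set small := (finite_setOfPred_absNorm_le (S := S) (2 ^ k)).toFinset
  refine ⟨M ^ #small, one_le_pow₀ hM1, fun J hJ => ?_⟩
  set t := normalizedFactors J
  set w : Ideal S → ℝ := fun P => if absNorm P < 2 ^ k then M else 1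
  have hw : ∏ P ∈ t.toFinset, w P ≤ M ^ #small := by
    rw [prod_ite, prod_const, prod_const, one_pow, mul_one]
    exact pow_le_pow_right₀ hM1
      (card_le_card fun P hP => by simpa [small] using (mem_filter.mp hP).2.le)
  calc ({I | I ∣ J}.ncard : ℝ) ^ k ≤ (∏ P ∈ t.toFinset, ((t.count P : ℝ) + 1)) ^ k := by
        gcongr; exact_mod_cast ncard_setOf_dvd_le_prod_count_add_one hJ
    _ = ∏ P ∈ t.toFinset, ((t.count P : ℝ) + 1) ^ k := (prod_pow ..).symm
    _ ≤ ∏ P ∈ t.toFinset, w P * (absNorm P : ℝ) ^ t.count P :=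
        prod_le_prod (fun _ _ => by positivity) fun P hP => succ_pow_le_ite_mul_pow hM
          (two_le_absNorm_of_mem_normalizedFactors (Multiset.mem_toFinset.mp hP)) _
    _ = (∏ P ∈ t.toFinset, w P) * absNorm J := by
        rw [prod_mul_distrib, absNorm_eq_prod_normalizedFactors hJ]; push_cast; rfl
    _ ≤ M ^ #small * absNorm J := by gcongr

theorem exists_ncard_dvd_span_natCast_sq_le :
    ∃ C : ℝ, 1 ≤ C ∧ ∀ m : ℕ, m ≠ 0 →
      ({I : Ideal S | I ∣ span {(m : S)}}.ncard : ℝ) ^ 2 ≤ C * m := by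
  obtain ⟨C, hC1, hC⟩ := exists_ncard_dvd_pow_le_mul_absNorm (S := S) (2 * Module.finrank ℤ S)
  refine ⟨C, hC1, fun m hm => le_mul_of_pow_le_mul_pow (Module.finrank_pos (R := ℤ) (M := S)).ne'
    (by positivity) (by positivity) hC1 ?_⟩
  have hspan : span {(m : S)} ≠ ⊥ := by simpa using hm
  have h := hC _ hspan
  rw [absNorm_span_natCast, pow_mul] at h
  exact_mod_cast h

theorem ncard_absNorm_eq_le_ncard_dvd_span {m : ℕ} (hm : m ≠ 0) :
    {I : Ideal S | absNorm I = m}.ncard ≤ {I | I ∣ span {(m : S)}}.ncard :=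
  Set.ncard_le_ncard (fun I (hI : absNorm I = m) => hI ▸ dvd_span_absNorm I)
    (finite_setOf_dvd (by simpa using hm))

theorem ncard_absNorm_mul_eq_le_ncard_dvd_span_sq {m : ℕ} (hm : m ≠ 0) :
    {p : Ideal S × Ideal S | absNorm (p.1 * p.2) = m}.ncard ≤
      {I | I ∣ span {(m : S)}}.ncard ^ 2 := by
  have hfin := finite_setOf_dvd (J := span {(m : S)}) (by simpa using hm)
  rw [sq, ← Set.ncard_prod]
  refine Set.ncard_le_ncard (fun p (hp : absNorm (p.1 * p.2) = m) => ?_) (hfin.prod hfin)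
  have hdvd := hp ▸ dvd_span_absNorm (p.1 * p.2)
  exact ⟨(dvd_mul_right _ _).trans hdvd, (dvd_mul_left _ _).trans hdvd⟩

theorem exists_ncard_absNorm_eq_le_mul :
    ∃ C : ℝ, 0 < C ∧ ∀ m : ℕ, m ≠ 0 →
      ({I : Ideal S | absNorm I = m}.ncard : ℝ) ≤ C * m ∧
      ({p : Ideal S × Ideal S | absNorm (p.1 * p.2) = m}.ncard : ℝ) ≤ C * m := by
  obtain ⟨C, hC1, hC⟩ := exists_ncard_dvd_span_natCast_sq_le (S := S)
  refine ⟨C, by linarith, fun m hm => ⟨?_, ?_⟩⟩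
  · calc ({I : Ideal S | absNorm I = m}.ncard : ℝ)
        ≤ ({I : Ideal S | I ∣ span {(m : S)}}.ncard : ℝ) ^ 2 := by
          exact_mod_cast
            (ncard_absNorm_eq_le_ncard_dvd_span hm).trans (Nat.le_self_pow two_ne_zero _)
      _ ≤ C * m := hC m hm
  · exact le_trans (by exact_mod_cast ncard_absNorm_mul_eq_le_ncard_dvd_span_sq hm) (hC m hm)

end Ideal

theorem finsum_inv_le_of_ncard_fiber_le {ι : Type*} (ν : ι → ℕ) {C : ℝ} (hC0 : 0 ≤ C)
    (hC : ∀ m, m ≠ 0 → ((ν ⁻¹' {m}).ncard : ℝ) ≤ C * m) (n : ℕ) {X : ℝ} (hX : 0 ≤ X) :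
    ∑ᶠ i, (if ν i ≠ 0 ∧ n ∣ ν i ∧ (ν i : ℝ) ≤ X then (ν i : ℝ)⁻¹ else 0) ≤ C * (X / n) := by
  set f := fun i => if ν i ≠ 0 ∧ n ∣ ν i ∧ (ν i : ℝ) ≤ X then (ν i : ℝ)⁻¹ else 0
  set T := (Ioc 0 ⌊X⌋₊).filter (n ∣ ·)
  have hT : ∀ {m}, m ∈ T ↔ m ≠ 0 ∧ n ∣ m ∧ (m : ℝ) ≤ X := by
    intro m
    simp only [T, mem_filter, mem_Ioc, Nat.le_floor_iff hX, Nat.pos_iff_ne_zero]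
    tauto
  -- `∑ᶠ` is `0` on an infinite support; otherwise each fibre over `T` lies in the finite support.
  by_cases hf : (Function.support f).Finite
  swap
  · rw [finsum_of_infinite_support hf]
    positivity
  have hsupp : ∀ {i}, i ∈ Function.support f ↔ ν i ∈ T := by
    intro i
    rw [Function.mem_support, hT]
    refine ⟨fun hi => by_contra fun h => hi (if_neg h), fun hi => ?_⟩
    simp only [f, if_pos hi, ne_eq, inv_eq_zero, Nat.cast_eq_zero, hi.1, not_false_eq_true]
  have hfiber : ∀ m ∈ T, ∑ i ∈ hf.toFinset with ν i = m, f i ≤ C := by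
    intro m hm
    have hm' := hT.mp hm
    calc ∑ i ∈ hf.toFinset with ν i = m, f i
        = ∑ i ∈ hf.toFinset with ν i = m, (m : ℝ)⁻¹ :=
          sum_congr rfl fun i hi => by
            obtain rfl := (mem_filter.mp hi).2
            exact if_pos hm'
      _ = (#{i ∈ hf.toFinset | ν i = m} : ℝ) * (m : ℝ)⁻¹ := by rw [sum_const, nsmul_eq_mul]
      _ ≤ ((ν ⁻¹' {m}).ncard : ℝ) * (m : ℝ)⁻¹ := by
          gcongr
          rw [← Set.ncard_coe_finset]
          exact Set.ncard_le_ncard (fun i hi => (mem_filter.mp hi).2)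
            (hf.subset fun i (hi : ν i = m) => hsupp.mpr (hi ▸ hm))
      _ ≤ C * m * (m : ℝ)⁻¹ := by gcongr; exact hC m hm'.1
      _ = C := by field_simp [Nat.cast_ne_zero.mpr hm'.1]
  calc ∑ᶠ i, f i = ∑ i ∈ hf.toFinset, f i := finsum_eq_sum f hf
    _ = ∑ m ∈ T, ∑ i ∈ hf.toFinset with ν i = m, f i :=
        (sum_fiberwise_of_maps_to (fun i hi => hsupp.mp (by simpa using hi)) f).symm
    _ ≤ ∑ m ∈ T, C := sum_le_sum hfiber
    _ = #T * C := by rw [sum_const, nsmul_eq_mul]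
    _ ≤ X / n * C := by
        gcongr
        rw [Nat.Ioc_filter_dvd_card_eq_div]
        exact Nat.cast_div_le.trans (by gcongr; exact Nat.floor_le hX)
    _ = C * (X / n) := mul_comm _ _

theorem mul_div_le_div_log_two_pow_mul {C : ℝ} (hC : 0 ≤ C) (k : ℕ) {X : ℝ} (hX : 2 ≤ X)
    {n : ℕ} (hn : 0 < n) {ε : ℝ} (hε : 0 ≤ ε) :
    C * (X / n) ≤ C / Real.log 2 ^ k * X * Real.log X ^ k * (n : ℝ) ^ ε / n := by
  have hlog2 : 0 < Real.log 2 := Real.log_pos one_lt_two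
  have hlog : 1 ≤ (Real.log X / Real.log 2) ^ k :=
    one_le_pow₀ ((one_le_div hlog2).mpr (Real.log_le_log two_pos hX))
  have hnε : 1 ≤ (n : ℝ) ^ ε := Real.one_le_rpow (by exact_mod_cast hn) hε
  calc C * (X / n) ≤ C * (X / n) * ((Real.log X / Real.log 2) ^ k * (n : ℝ) ^ ε) :=
        le_mul_of_one_le_right (by positivity) (one_le_mul_of_one_le_of_one_le hlog hnε)
    _ = C / Real.log 2 ^ k * X * Real.log X ^ k * (n : ℝ) ^ ε / n := by
        rw [div_pow]; ring

/-- For a fixed number field `L` and every `ε > 0` there are constants depending only on `L`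
and `ε` such that for every positive integer `n` and all real `X ≥ 2`:
(i) `Σ_{n | N(𝔞), N(𝔞) ≤ X} 1/N(𝔞) = O(X·log X·n^ε/n)`, and
(ii) `Σ_{n | N(𝔞𝔟), N(𝔞𝔟) ≤ X} 1/N(𝔞𝔟) = O(X·log² X·n^ε/n)`, the sums over nonzero
ideals (resp. pairs of nonzero ideals) of `𝓞 L`. -/
theorem norm_multiple_reciprocal_sums (L : Type*) [Field L] [NumberField L] (ε : ℝ)
    (hε : 0 < ε) :
    ∃ c₁ c₂ : ℝ, 0 < c₁ ∧ 0 < c₂ ∧ ∀ n : ℕ, 0 < n → ∀ X : ℝ, 2 ≤ X →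
      (∑ᶠ I : Ideal (𝓞 L),
          if I ≠ ⊥ ∧ n ∣ Ideal.absNorm I ∧ (Ideal.absNorm I : ℝ) ≤ X then
            ((Ideal.absNorm I : ℝ))⁻¹ else 0)
        ≤ c₁ * X * Real.log X * (n : ℝ) ^ ε / n ∧
      (∑ᶠ p : Ideal (𝓞 L) × Ideal (𝓞 L),
          if p.1 ≠ ⊥ ∧ p.2 ≠ ⊥ ∧ n ∣ Ideal.absNorm (p.1 * p.2) ∧
              (Ideal.absNorm (p.1 * p.2) : ℝ) ≤ X then
            ((Ideal.absNorm (p.1 * p.2) : ℝ))⁻¹ else 0)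
        ≤ c₂ * X * Real.log X ^ 2 * (n : ℝ) ^ ε / n := by
  obtain ⟨C, hC0, hC⟩ := Ideal.exists_ncard_absNorm_eq_le_mul (S := 𝓞 L)
  refine ⟨C / Real.log 2, C / Real.log 2 ^ 2, by positivity, by positivity,
    fun n hn X hX => ⟨?_, ?_⟩⟩
  · simp only [← Ideal.absNorm_eq_zero_iff.not]
    calc _ ≤ C * (X / n) := finsum_inv_le_of_ncard_fiber_le _ hC0.le (fun m hm => (hC m hm).1) n
            (by linarith)
      _ ≤ _ := by simpa using mul_div_le_div_log_two_pow_mul hC0.le 1 hX hn hε.le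
  · have hne_bot : ∀ I J : Ideal (𝓞 L), I ≠ ⊥ ∧ J ≠ ⊥ ↔ Ideal.absNorm (I * J) ≠ 0 := fun I J => by
      simp only [ne_eq, Ideal.absNorm_eq_zero_iff, Ideal.mul_eq_bot, not_or]
    calc _ = ∑ᶠ p : Ideal (𝓞 L) × Ideal (𝓞 L),
            if Ideal.absNorm (p.1 * p.2) ≠ 0 ∧ n ∣ Ideal.absNorm (p.1 * p.2) ∧
              (Ideal.absNorm (p.1 * p.2) : ℝ) ≤ X then ((Ideal.absNorm (p.1 * p.2) : ℝ))⁻¹ else 0 :=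
          finsum_congr fun p => if_congr (by rw [← and_assoc, hne_bot]) rfl rfl
      _ ≤ C * (X / n) := finsum_inv_le_of_ncard_fiber_le _ hC0.le (fun m hm => (hC m hm).2) n
            (by linarith)
      _ ≤ _ := mul_div_le_div_log_two_pow_mul hC0.le 2 hX hn hε.le
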